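/- Property P₃ of B-typical sets, lower bound: for every ε > 0 there exists N such that for all n ≥ N, the cardinality of the B-typical set satisfies |B^n_{V,ε}(U)| ≥ (1−ε)·2^{n(H(U)−ε)}. -/

import Mathlib

open Real
open scoped BigOperators Classical

noncomputable section

/-- Probability of a length-`n` sequence under the i.i.d. product of the pmf `p`. -/
def seqProb {α : Type*} (p : α → ℝ) {n : ℕ} (u : Fin n → α) : ℝ :=
  ∏ i, p (u i)

/-- Entropy in bits of a pmf on a finite alphabet. -/
def ent {α : Type*} [Fintype α] (p : α → ℝ) : ℝ :=
  -∑ a, p a * logb 2 (p a)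

variable {U V : Type*} [Fintype U] [Fintype V]

/-- `U`-marginal of a joint pmf on `U × V`. -/
def margU (p : U × V → ℝ) : U → ℝ := fun u => ∑ v, p (u, v)

/-- `V`-marginal of a joint pmf on `U × V`. -/
def margV (p : U × V → ℝ) : V → ℝ := fun v => ∑ u, p (u, v)

/-- Conditional pmf of `V` given `U`. -/
def condVU (p : U × V → ℝ) (u : U) (v : V) : ℝ := p (u, v) / margU p u

/-- The weakly typical set `A^n_ε(U)` with respect to a pmf `p`. -/
def typicalSet {α : Type*} [Fintype α] (p : α → ℝ) (n : ℕ) (ε : ℝ) :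
    Set (Fin n → α) :=
  {u | 0 < seqProb p u ∧ |(-(1 / (n : ℝ)) * logb 2 (seqProb p u)) - ent p| ≤ ε}

/-- The jointly typical set `A^n_ε(UV)` with respect to a joint pmf `p`. -/
def jointTypicalSet (p : U × V → ℝ) (n : ℕ) (ε : ℝ) :
    Set ((Fin n → U) × (Fin n → V)) :=
  {uv | 0 < seqProb (margU p) uv.1 ∧ 0 < seqProb (margV p) uv.2 ∧
    0 < seqProb p (fun i => (uv.1 i, uv.2 i)) ∧
    |(-(1 / (n : ℝ)) * logb 2 (seqProb (margU p) uv.1)) - ent (margU p)| ≤ ε ∧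
    |(-(1 / (n : ℝ)) * logb 2 (seqProb (margV p) uv.2)) - ent (margV p)| ≤ ε ∧
    |(-(1 / (n : ℝ)) * logb 2 (seqProb p (fun i => (uv.1 i, uv.2 i)))) - ent p| ≤ ε}

/-- The B-typical set `B^n_{V,ε}(U)`. -/
def BtypicalSet (p : U × V → ℝ) (n : ℕ) (ε : ℝ) : Set (Fin n → U) :=
  {u | u ∈ typicalSet (margU p) n ε ∧
    1 - ε ≤ ∑ v : Fin n → V,
      if (u, v) ∈ jointTypicalSet p n ε then ∏ i, condVU p (u i) (v i) else 0}

/-!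
By Chebyshev's inequality for i.i.d. sums, the jointly typical set has probability at least
`1 - ε ^ 2` once `n` is large. That probability is the `p(u⃗)`-average of the conditional
probability `c(u⃗)` that `(u⃗, v⃗)` is jointly typical. Since `c ≤ 1` everywhere and `c < 1 - ε`
off `B^n_{V,ε}(U)`, a reverse Markov argument gives `p(B^n_{V,ε}(U)) ≥ 1 - ε`. Every element of
`B^n_{V,ε}(U)` is typical, so has probability at most `2^{-n(H(U)-ε)}`, and the bound on the
cardinality follows.
-/

open Finset Filter

lemma sum_filter_not_and_le {ι : Type*} (s : Finset ι) {f : ι → ℝ} (hf : ∀ i, 0 ≤ f i)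
    (P Q : ι → Prop) [DecidablePred P] [DecidablePred Q] :
    ∑ i ∈ s with ¬(P i ∧ Q i), f i ≤ ∑ i ∈ s with ¬P i, f i + ∑ i ∈ s with ¬Q i, f i := by
  simp_rw [not_and_or]
  rw [filter_or, ← sum_union_inter]
  exact le_add_of_nonneg_right (sum_nonneg fun i _ => hf i)

lemma sum_mul_le_sum_filter_add_mul {ι : Type*} (s : Finset ι) {w c : ι → ℝ} {t : ℝ}
    (P : ι → Prop) [DecidablePred P] (hw : ∀ i, 0 ≤ w i) (hc : ∀ i, c i ≤ 1)
    (hct : ∀ i, ¬P i → c i ≤ t) :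
    ∑ i ∈ s, w i * c i ≤ ∑ i ∈ s with P i, w i + t * ∑ i ∈ s with ¬P i, w i := by
  rw [← sum_filter_add_sum_filter_not s P, mul_sum]
  refine add_le_add (sum_le_sum fun i _ => mul_le_of_le_one_right (hw i) (hc i))
    (sum_le_sum fun i hi => ?_)
  rw [mul_comm t]
  exact mul_le_mul_of_nonneg_left (hct i (mem_filter.1 hi).2) (hw i)

section SeqProb

variable {α : Type*} {q : α → ℝ} {n : ℕ}

lemma seqProb_nonneg (hq : ∀ a, 0 ≤ q a) (w : Fin n → α) : 0 ≤ seqProb q w :=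
  prod_nonneg fun _ _ => hq _

lemma pos_of_seqProb_pos (hq : ∀ a, 0 ≤ q a) {w : Fin n → α} (hw : 0 < seqProb q w)
    (i : Fin n) : 0 < q (w i) :=
  (hq _).lt_of_ne fun h => hw.ne' (prod_eq_zero (mem_univ i) h.symm)

variable [Fintype α]

lemma sum_seqProb_mul_prod (q : α → ℝ) (f : Fin n → α → ℝ) :
    ∑ w : Fin n → α, seqProb q w * ∏ i, f i (w i) = ∏ i, ∑ a, q a * f i a := by
  simp only [seqProb, ← prod_mul_distrib]
  exact (Fintype.prod_sum fun i a => q a * f i a).symm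

lemma sum_seqProb (hq : ∑ a, q a = 1) : ∑ w : Fin n → α, seqProb q w = 1 := by
  simpa [hq] using sum_seqProb_mul_prod (n := n) q fun _ _ => 1

lemma sum_seqProb_mul_mul_of_centered (hq : ∑ a, q a = 1) {g : α → ℝ}
    (hg : ∑ a, q a * g a = 0) (i j : Fin n) :
    ∑ w : Fin n → α, seqProb q w * (g (w i) * g (w j)) =
      if i = j then ∑ a, q a * g a ^ 2 else 0 := by
  set f : Fin n → α → ℝ := fun k a => (if k = i then g a else 1) * (if k = j then g a else 1)
  have hprod (w : Fin n → α) : g (w i) * g (w j) = ∏ k, f k (w k) := by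
    rw [prod_mul_distrib, prod_ite_eq', prod_ite_eq']
    simp
  simp_rw [hprod, sum_seqProb_mul_prod]
  split_ifs with hij
  · subst hij
    have hfactor (k : Fin n) : ∑ a, q a * f k a = if k = i then ∑ a, q a * g a ^ 2 else 1 := by
      split_ifs with hk <;> simp [f, hk, hq, sq]
    simp [hfactor]
  · exact prod_eq_zero (mem_univ i) (by simpa [f, hij] using hg)

lemma sum_seqProb_mul_sum_sq (hq : ∑ a, q a = 1) {g : α → ℝ} (hg : ∑ a, q a * g a = 0) :
    ∑ w : Fin n → α, seqProb q w * (∑ i, g (w i)) ^ 2 = n * ∑ a, q a * g a ^ 2 := by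
  calc ∑ w : Fin n → α, seqProb q w * (∑ i, g (w i)) ^ 2
      = ∑ i, ∑ j, ∑ w : Fin n → α, seqProb q w * (g (w i) * g (w j)) := by
        simp_rw [sq, sum_mul_sum, mul_sum]
        rw [sum_comm]
        exact sum_congr rfl fun i _ => sum_comm
    _ = n * ∑ a, q a * g a ^ 2 := by simp [sum_seqProb_mul_mul_of_centered hq hg]

end SeqProb

section Chebyshev

variable {α : Type*} [Fintype α] {q : α → ℝ} {n : ℕ} {ε : ℝ}

lemma sum_seqProb_filter_le_div (hq0 : ∀ a, 0 ≤ q a) (hq1 : ∑ a, q a = 1) {g : α → ℝ}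
    (hg : ∑ a, q a * g a = 0) (hn : 0 < n) (hε : 0 < ε) :
    ∑ w : Fin n → α with n * ε ≤ |∑ i, g (w i)|, seqProb q w ≤
      (∑ a, q a * g a ^ 2) / (n * ε ^ 2) := by
  have hnε : (0 : ℝ) < (n * ε) ^ 2 := by positivity
  calc ∑ w : Fin n → α with n * ε ≤ |∑ i, g (w i)|, seqProb q w
      ≤ ∑ w : Fin n → α with n * ε ≤ |∑ i, g (w i)|,
          seqProb q w * (∑ i, g (w i)) ^ 2 / (n * ε) ^ 2 := by
        refine sum_le_sum fun w hw => ?_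
        rw [le_div_iff₀ hnε, ← sq_abs (∑ i, _)]
        have := (mem_filter.1 hw).2
        gcongr
        exact seqProb_nonneg hq0 w
    _ ≤ ∑ w : Fin n → α, seqProb q w * (∑ i, g (w i)) ^ 2 / (n * ε) ^ 2 :=
        sum_le_sum_of_subset_of_nonneg (filter_subset _ _) fun w _ _ =>
          div_nonneg (mul_nonneg (seqProb_nonneg hq0 w) (sq_nonneg _)) hnε.le
    _ = (∑ a, q a * g a ^ 2) / (n * ε ^ 2) := by
        rw [← sum_div, sum_seqProb_mul_sum_sq hq1 hg]
        field_simp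

end Chebyshev

section LogTypical

variable {α : Type*} {q : α → ℝ} {n : ℕ} {ε : ℝ}

/-- `typicalSet q` is `logTypicalSet q (ent q)`; the joint typical set is an intersection of
three such sets, for the two marginals and for `p` itself. -/
def logTypicalSet (f : α → ℝ) (h : ℝ) (n : ℕ) (ε : ℝ) : Set (Fin n → α) :=
  {w | 0 < seqProb f w ∧ |(-(1 / (n : ℝ)) * logb 2 (seqProb f w)) - h| ≤ ε}

lemma neg_mul_logb_seqProb_sub {f : α → ℝ} {w : Fin n → α} (hf : ∀ i, 0 < f (w i))
    (hn : 0 < n) (h : ℝ) :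
    -(1 / (n : ℝ)) * logb 2 (seqProb f w) - h = (∑ i, (-logb 2 (f (w i)) - h)) / n := by
  rw [seqProb, logb_prod _ _ fun i _ => (hf i).ne', sum_sub_distrib]
  simp only [one_div, neg_mul, sum_neg_distrib, sum_const, card_univ, Fintype.card_fin,
    nsmul_eq_mul]
  field_simp

variable [Fintype α]

lemma ent_eq_sum_mul_neg_logb (q : α → ℝ) : ∑ a, q a * -logb 2 (q a) = ent q := by
  simp [ent]

lemma sum_seqProb_not_mem_logTypicalSet_le (hq0 : ∀ a, 0 ≤ q a) (hq1 : ∑ a, q a = 1)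
    {f : α → ℝ} (hf : ∀ a, 0 < q a → 0 < f a) {h : ℝ} (hh : ∑ a, q a * -logb 2 (f a) = h)
    (hn : 0 < n) (hε : 0 < ε) :
    ∑ w : Fin n → α with w ∉ logTypicalSet f h n ε, seqProb q w ≤
      (∑ a, q a * (-logb 2 (f a) - h) ^ 2) / (n * ε ^ 2) := by
  have hcentered : ∑ a, q a * (-logb 2 (f a) - h) = 0 := by
    simp only [mul_sub, sum_sub_distrib, hh, ← sum_mul, hq1, one_mul, sub_self]
  refine le_trans ?_ (sum_seqProb_filter_le_div hq0 hq1 hcentered hn hε)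
  rw [sum_filter, sum_filter]
  refine sum_le_sum fun w _ => ?_
  by_cases hdev : n * ε ≤ |∑ i, (-logb 2 (f (w i)) - h)|
  · rw [if_pos hdev]
    split_ifs
    exacts [seqProb_nonneg hq0 w, le_rfl]
  rw [if_neg hdev]
  split_ifs with hw
  · rfl
  by_contra! hpos
  have hfw (i : Fin n) : 0 < f (w i) := hf _ (pos_of_seqProb_pos hq0 hpos i)
  refine hw ⟨prod_pos fun i _ => hfw i, ?_⟩
  have hn' : (0 : ℝ) < n := by exact_mod_cast hn
  rw [neg_mul_logb_seqProb_sub hfw hn, abs_div, abs_of_pos hn', div_le_iff₀ hn', mul_comm]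
  exact (not_le.1 hdev).le

end LogTypical

section Marginal

variable {β γ : Type*} {p : β × γ → ℝ}

lemma le_margU [Fintype γ] (hp0 : ∀ x, 0 ≤ p x) (a : β) (b : γ) : p (a, b) ≤ margU p a :=
  single_le_sum (fun b _ => hp0 (a, b)) (mem_univ b)

lemma le_margV [Fintype β] (hp0 : ∀ x, 0 ≤ p x) (a : β) (b : γ) : p (a, b) ≤ margV p b :=
  single_le_sum (fun a _ => hp0 (a, b)) (mem_univ a)

lemma margU_nonneg [Fintype γ] (hp0 : ∀ x, 0 ≤ p x) (a : β) : 0 ≤ margU p a :=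
  sum_nonneg fun b _ => hp0 (a, b)

lemma margU_mul_condVU [Fintype γ] (hp0 : ∀ x, 0 ≤ p x) (a : β) (b : γ) :
    margU p a * condVU p a b = p (a, b) := by
  rcases eq_or_ne (margU p a) 0 with h | h
  · have hab : p (a, b) = 0 := (h ▸ le_margU hp0 a b).antisymm (hp0 _)
    simp [condVU, h, hab]
  · exact mul_div_cancel₀ _ h

lemma sum_condVU_le_one [Fintype γ] (a : β) : ∑ b, condVU p a b ≤ 1 := by
  simp only [condVU]
  rw [← sum_div]
  exact div_self_le_one _

variable [Fintype β] [Fintype γ]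

lemma sum_margU (hp1 : ∑ x, p x = 1) : ∑ a, margU p a = 1 := by
  rw [← hp1, Fintype.sum_prod_type]
  rfl

lemma sum_mul_neg_logb_margU : ∑ x, p x * -logb 2 (margU p x.1) = ent (margU p) := by
  simp [Fintype.sum_prod_type, ← sum_mul, ent, margU]

lemma sum_mul_neg_logb_margV : ∑ x, p x * -logb 2 (margV p x.2) = ent (margV p) := by
  simp [Fintype.sum_prod_type_right, ← sum_mul, ent, margV]

end Marginal

section Joint

variable {p : U × V → ℝ} {n : ℕ} {ε : ℝ}

lemma unzip_mem_jointTypicalSet_iff (w : Fin n → U × V) :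
    (fun i => (w i).1, fun i => (w i).2) ∈ jointTypicalSet p n ε ↔
      w ∈ logTypicalSet (fun x => margU p x.1) (ent (margU p)) n ε ∧
        w ∈ logTypicalSet (fun x => margV p x.2) (ent (margV p)) n ε ∧
          w ∈ logTypicalSet p (ent p) n ε := by
  simp only [jointTypicalSet, logTypicalSet, Set.mem_ofPred_eq]
  tauto

lemma sum_jointTypicalSet_eq_sum_unzip (p : U × V → ℝ) (n : ℕ) (ε : ℝ) :
    ∑ uv with uv ∈ jointTypicalSet p n ε, seqProb p (fun i => (uv.1 i, uv.2 i)) =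
      ∑ w : Fin n → U × V with (fun i => (w i).1, fun i => (w i).2) ∈ jointTypicalSet p n ε,
        seqProb p w := by
  rw [sum_filter, sum_filter,
    ← (Equiv.arrowProdEquivProdArrow (Fin n) (fun _ => U) (fun _ => V)).sum_comp]
  rfl

lemma one_sub_sum_jointTypicalSet_le (hp0 : ∀ x, 0 ≤ p x) (hp1 : ∑ x, p x = 1) (hn : 0 < n)
    (hε : 0 < ε) :
    1 - ∑ uv with uv ∈ jointTypicalSet p n ε, seqProb p (fun i => (uv.1 i, uv.2 i)) ≤
      ((∑ x, p x * (-logb 2 (margU p x.1) - ent (margU p)) ^ 2) +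
        (∑ x, p x * (-logb 2 (margV p x.2) - ent (margV p)) ^ 2) +
          ∑ x, p x * (-logb 2 (p x) - ent p) ^ 2) / (n * ε ^ 2) := by
  have hU (x : U × V) (hx : 0 < p x) : 0 < margU p x.1 := hx.trans_le (le_margU hp0 x.1 x.2)
  have hV (x : U × V) (hx : 0 < p x) : 0 < margV p x.2 := hx.trans_le (le_margV hp0 x.1 x.2)
  set TU := logTypicalSet (fun x : U × V => margU p x.1) (ent (margU p)) n ε
  set TV := logTypicalSet (fun x : U × V => margV p x.2) (ent (margV p)) n ε
  set TUV := logTypicalSet p (ent p) n ε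
  have htotal := sum_filter_add_sum_filter_not univ
    (fun w : Fin n → U × V => w ∈ TU ∧ w ∈ TV ∧ w ∈ TUV) (seqProb p)
  rw [sum_seqProb hp1] at htotal
  calc 1 - ∑ uv with uv ∈ jointTypicalSet p n ε, seqProb p (fun i => (uv.1 i, uv.2 i))
      = ∑ w : Fin n → U × V with ¬(w ∈ TU ∧ w ∈ TV ∧ w ∈ TUV), seqProb p w := by
        simp_rw [sum_jointTypicalSet_eq_sum_unzip, unzip_mem_jointTypicalSet_iff]
        linarith
    _ ≤ ∑ w : Fin n → U × V with w ∉ TU, seqProb p w +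
          ∑ w : Fin n → U × V with w ∉ TV, seqProb p w +
            ∑ w : Fin n → U × V with w ∉ TUV, seqProb p w := by
        rw [add_assoc]
        exact (sum_filter_not_and_le univ (seqProb_nonneg hp0) (· ∈ TU)
          fun w => w ∈ TV ∧ w ∈ TUV).trans <| add_le_add le_rfl
            (sum_filter_not_and_le univ (seqProb_nonneg hp0) (· ∈ TV) (· ∈ TUV))
    _ ≤ _ := by
      rw [add_div, add_div]
      gcongr
      · exact sum_seqProb_not_mem_logTypicalSet_le hp0 hp1 hU sum_mul_neg_logb_margU hn hε
      · exact sum_seqProb_not_mem_logTypicalSet_le hp0 hp1 hV sum_mul_neg_logb_margV hn hε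
      · exact sum_seqProb_not_mem_logTypicalSet_le hp0 hp1 (fun _ => id)
          (ent_eq_sum_mul_neg_logb p) hn hε

lemma eventually_one_sub_le_sum_jointTypicalSet (hp0 : ∀ x, 0 ≤ p x) (hp1 : ∑ x, p x = 1)
    {δ : ℝ} (hε : 0 < ε) (hδ : 0 < δ) :
    ∀ᶠ n in atTop,
      1 - δ ≤ ∑ uv with uv ∈ jointTypicalSet p n ε, seqProb p (fun i => (uv.1 i, uv.2 i)) := by
  set C := (∑ x, p x * (-logb 2 (margU p x.1) - ent (margU p)) ^ 2) +
    (∑ x, p x * (-logb 2 (margV p x.2) - ent (margV p)) ^ 2) +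
      ∑ x, p x * (-logb 2 (p x) - ent p) ^ 2
  have hsmall : ∀ᶠ n : ℕ in atTop, C / ε ^ 2 / n ≤ δ :=
    (tendsto_const_div_atTop_nhds_zero_nat (C / ε ^ 2)).eventually (ge_mem_nhds hδ)
  filter_upwards [hsmall, eventually_gt_atTop 0] with n hn hn0
  have := one_sub_sum_jointTypicalSet_le hp0 hp1 hn0 hε
  rw [div_div, mul_comm] at hn
  linarith

end Joint

section BTypical

variable {p : U × V → ℝ} {n : ℕ} {ε : ℝ}

/-- `P((u⃗, v⃗) ∈ A^n_ε(UV) | u⃗)`, the quantity that `BtypicalSet` compares with `1 - ε`. -/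
def condProbJointTypical (p : U × V → ℝ) (n : ℕ) (ε : ℝ) (u : Fin n → U) : ℝ :=
  ∑ v : Fin n → V, if (u, v) ∈ jointTypicalSet p n ε then ∏ i, condVU p (u i) (v i) else 0

lemma condProbJointTypical_le_one (hp0 : ∀ x, 0 ≤ p x) (u : Fin n → U) :
    condProbJointTypical p n ε u ≤ 1 := by
  have hcond (a : U) (b : V) : 0 ≤ condVU p a b :=
    div_nonneg (hp0 _) (margU_nonneg hp0 a)
  calc condProbJointTypical p n ε u ≤ ∑ v : Fin n → V, ∏ i, condVU p (u i) (v i) :=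
        sum_le_sum fun _ _ => by
          split_ifs
          exacts [le_rfl, prod_nonneg fun i _ => hcond _ _]
    _ = ∏ i, ∑ b, condVU p (u i) b := (Fintype.prod_sum fun i b => condVU p (u i) b).symm
    _ ≤ 1 := prod_le_one (fun i _ => sum_nonneg fun b _ => hcond _ _)
        fun i _ => sum_condVU_le_one _

lemma condProbJointTypical_eq_zero {u : Fin n → U} (hu : u ∉ typicalSet (margU p) n ε) :
    condProbJointTypical p n ε u = 0 :=
  sum_eq_zero fun _ _ => if_neg fun huv => hu ⟨huv.1, huv.2.2.2.1⟩

lemma sum_jointTypicalSet_eq_sum_mul_condProb (hp0 : ∀ x, 0 ≤ p x) :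
    ∑ uv with uv ∈ jointTypicalSet p n ε, seqProb p (fun i => (uv.1 i, uv.2 i)) =
      ∑ u, seqProb (margU p) u * condProbJointTypical p n ε u := by
  rw [sum_filter, Fintype.sum_prod_type]
  refine sum_congr rfl fun u _ => ?_
  rw [condProbJointTypical, mul_sum]
  refine sum_congr rfl fun v _ => ?_
  split_ifs
  · simp only [seqProb, ← prod_mul_distrib, margU_mul_condVU hp0]
  · rw [mul_zero]

lemma one_sub_le_sum_BtypicalSet (hp0 : ∀ x, 0 ≤ p x) (hp1 : ∑ x, p x = 1) (hε : 0 < ε)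
    (hJ : 1 - ε ^ 2 ≤
      ∑ uv with uv ∈ jointTypicalSet p n ε, seqProb p (fun i => (uv.1 i, uv.2 i))) :
    1 - ε ≤ ∑ u with u ∈ BtypicalSet p n ε, seqProb (margU p) u := by
  have hw := seqProb_nonneg (n := n) (margU_nonneg hp0)
  rcases lt_or_ge 1 ε with hε1 | hε1
  · linarith [sum_nonneg fun u (_ : u ∈ univ.filter (· ∈ BtypicalSet p n ε)) => hw u]
  have hlow (u : Fin n → U) (hu : u ∉ BtypicalSet p n ε) :
      condProbJointTypical p n ε u ≤ 1 - ε := by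
    by_cases ht : u ∈ typicalSet (margU p) n ε
    · exact (not_le.1 fun hc => hu ⟨ht, hc⟩).le
    · rw [condProbJointTypical_eq_zero ht]
      linarith
  have hmarkov := sum_mul_le_sum_filter_add_mul univ (· ∈ BtypicalSet p n ε) hw
    (condProbJointTypical_le_one hp0) hlow
  have htotal := sum_filter_add_sum_filter_not univ (· ∈ BtypicalSet p n ε) (seqProb (margU p))
  rw [sum_seqProb (sum_margU hp1)] at htotal
  rw [sum_jointTypicalSet_eq_sum_mul_condProb hp0] at hJ
  nlinarith

end BTypical

lemma seqProb_le_of_mem_typicalSet {α : Type*} [Fintype α] {q : α → ℝ} {n : ℕ} {ε : ℝ}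
    (hn : 0 < n) {u : Fin n → α} (hu : u ∈ typicalSet q n ε) :
    seqProb q u ≤ 2 ^ (-(n * (ent q - ε))) := by
  have hn' : (0 : ℝ) < n := by exact_mod_cast hn
  have hlog : logb 2 (seqProb q u) ≤ -(n * (ent q - ε)) := by
    have h := mul_le_mul_of_nonneg_left (abs_le.1 hu.2).1 hn'.le
    field_simp at h
    linarith
  calc seqProb q u = 2 ^ logb 2 (seqProb q u) := (rpow_logb two_pos (by norm_num) hu.1).symm
    _ ≤ 2 ^ (-(n * (ent q - ε))) := rpow_le_rpow_of_exponent_le one_le_two hlog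

/-- **Property P₃ of B-typical sets, lower bound**: for every `ε > 0` there exists `N`
such that for all `n ≥ N`, `|B^n_{V,ε}(U)| ≥ (1-ε)·2^{n(H(U)-ε)}`. -/
theorem B_typical_card_lower
    (p : U × V → ℝ) (hp0 : ∀ x, 0 ≤ p x) (hp1 : ∑ x, p x = 1)
    (ε : ℝ) (hε : 0 < ε) :
    ∃ N : ℕ, ∀ n : ℕ, N ≤ n →
      (1 - ε) * (2 : ℝ) ^ ((n : ℝ) * (ent (margU p) - ε)) ≤
        ((BtypicalSet p n ε).ncard : ℝ) := by
  obtain ⟨N, hN⟩ :=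
    (eventually_one_sub_le_sum_jointTypicalSet hp0 hp1 hε (pow_pos hε 2)).exists_forall_of_atTop
  refine ⟨max N 1, fun n hn => ?_⟩
  set B := univ.filter (· ∈ BtypicalSet p n ε)
  have hprob : 1 - ε ≤ ∑ u ∈ B, seqProb (margU p) u :=
    one_sub_le_sum_BtypicalSet hp0 hp1 hε (hN n (le_of_max_le_left hn))
  have hcard : ∑ u ∈ B, seqProb (margU p) u ≤ B.card * 2 ^ (-(n * (ent (margU p) - ε))) := by
    simpa using sum_le_card_nsmul B _ _ fun u hu =>
      seqProb_le_of_mem_typicalSet (by omega) (mem_filter.1 hu).2.1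
  have hB : (BtypicalSet p n ε).ncard = B.card := by
    rw [← Set.ncard_coe_finset, coe_filter_univ, Set.ofPred_mem_eq]
  calc (1 - ε) * (2 : ℝ) ^ ((n : ℝ) * (ent (margU p) - ε))
      ≤ B.card * 2 ^ (-(n * (ent (margU p) - ε))) * 2 ^ ((n : ℝ) * (ent (margU p) - ε)) := by
        gcongr
        linarith
    _ = (BtypicalSet p n ε).ncard := by
        rw [mul_assoc, ← rpow_add two_pos, neg_add_cancel, rpow_zero, mul_one, hB]
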